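/- The localization of the Stanley–Reisner ring k[Δ] at the prime ideal P_F = (x_j : j ∉ F) associated to a face F is isomorphic (as a k-algebra, up to further localization at the maximal ideal) to the Laurent-polynomial extension k[lk F][x_i^{±1} : i ∈ F] localized appropriately; in particular, inverting the variables indexed by F in k[Δ] yields a ring isomorphic to k[lk F][x_i^{±1} : i ∈ F]. -/

import Mathlib

set_option synthInstance.maxHeartbeats 1000000
set_option maxHeartbeats 1000000

open MvPolynomial

variable (n : ℕ) (k : Type) [Field k]

/-- The Stanley–Reisner ideal of a complex `K` on `[n]`. -/
noncomputable def srIdeal (K : Set (Finset (Fin n))) : Ideal (MvPolynomial (Fin n) k) :=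
  Ideal.span {p | ∃ s : Finset (Fin n), s ∉ K ∧ p = ∏ i ∈ s, (X i : MvPolynomial (Fin n) k)}

/-- The link of a face `F` of `Δ`. -/
def link (Δ : Set (Finset (Fin n))) (F : Finset (Fin n)) : Set (Finset (Fin n)) :=
  {G | G ∈ Δ ∧ F ∩ G = ∅ ∧ F ∪ G ∈ Δ}

/-- The Stanley–Reisner ring `k[lk F]` of the link, on the vertex set `[n] \ F`. -/
noncomputable abbrev linkRing (Δ : Set (Finset (Fin n))) (F : Finset (Fin n)) :=
  MvPolynomial {i : Fin n // i ∉ F} k ⧸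
    Ideal.span {p | ∃ s : Finset {i : Fin n // i ∉ F},
      s.image Subtype.val ∉ link n Δ F ∧
      p = ∏ i ∈ s, (X i : MvPolynomial {i : Fin n // i ∉ F} k)}

/-!
Send `x_i` to the group-like element `t_i` of `ℤ^F` when `i ∈ F`, and to the class of `y_i` in
`k[lk F]` otherwise. A non-face `s` goes to `t^(s ∩ F) · y^(s \ F)`, and `s \ F` is not in the
link, so `I_Δ` is killed and the `x_i` with `i ∈ F` become units: this gives a map out of the
localization. Conversely, if `G` is disjoint from `F` and not in the link then `F ∪ G` is not a
face, so `x^G` is annihilated by the unit `x^F` of the localization; hence `y_j ↦ x_j`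
defines a map on `k[lk F]`, which extends to the Laurent ring by `t_i ↦ x_i`. The two maps are
mutually inverse on generators.
-/

lemma Finset.image_val_subtype {α : Type*} [DecidableEq α] (p : α → Prop) [DecidablePred p]
    (s : Finset α) :
    (s.subtype p).image Subtype.val = s.filter p := by
  ext; simp [and_comm]

namespace Finsupp

variable {ι G : Type*} [CommGroup G]

noncomputable def zpowHom (u : ι → G) : Multiplicative (ι →₀ ℤ) →* G :=
  AddMonoidHom.toMultiplicativeLeft <|
    liftAddHom fun i => zmultiplesHom (Additive G) (Additive.ofMul (u i))

@[simp]
lemma zpowHom_single_one (u : ι → G) (i : ι) :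
    zpowHom u (Multiplicative.ofAdd (single i 1)) = u i := by
  simp [zpowHom]

end Finsupp

namespace StanleyReisner

open AddMonoidAlgebra

variable (Δ : Set (Finset (Fin n))) (F : Finset (Fin n))

-- Without this instance, instance search fails to see that the units of
-- `Localization (faceSubmonoid …)` form a commutative group.
noncomputable local instance : CommRing (MvPolynomial (Fin n) k ⧸ srIdeal n k Δ) :=
  Ideal.Quotient.commRing _

noncomputable abbrev linkIdeal : Ideal (MvPolynomial {i : Fin n // i ∉ F} k) :=
  Ideal.span {p | ∃ s : Finset {i : Fin n // i ∉ F},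
    s.image Subtype.val ∉ link n Δ F ∧
    p = ∏ i ∈ s, (X i : MvPolynomial {i : Fin n // i ∉ F} k)}

noncomputable abbrev faceSubmonoid : Submonoid (MvPolynomial (Fin n) k ⧸ srIdeal n k Δ) :=
  Submonoid.closure ((fun i : Fin n => Ideal.Quotient.mk (srIdeal n k Δ) (X i)) '' ↑F)

noncomputable abbrev LinkLaurent : Type :=
  AddMonoidAlgebra (linkRing n k Δ F) ({i : Fin n // i ∈ F} →₀ ℤ)

variable {n Δ F} in
lemma mem_link_iff_union_mem (hΔ : IsLowerSet Δ) {G : Finset (Fin n)} (hG : Disjoint F G) :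
    G ∈ link n Δ F ↔ F ∪ G ∈ Δ :=
  ⟨fun h => h.2.2, fun h =>
    ⟨hΔ Finset.subset_union_right h, Finset.disjoint_iff_inter_eq_empty.1 hG, h⟩⟩

section ToLinkLaurent

noncomputable def laurentVar (i : Fin n) : LinkLaurent n k Δ F :=
  if h : i ∈ F then single (Finsupp.single ⟨i, h⟩ 1) 1
  else algebraMap _ _ (Ideal.Quotient.mk (linkIdeal n k Δ F) (X ⟨i, h⟩))

lemma laurentVar_coe_of_mem (i : {i : Fin n // i ∈ F}) :
    laurentVar n k Δ F i = single (Finsupp.single i 1) 1 :=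
  dif_pos i.2

lemma laurentVar_coe_of_notMem (j : {i : Fin n // i ∉ F}) :
    laurentVar n k Δ F j = algebraMap _ _ (Ideal.Quotient.mk (linkIdeal n k Δ F) (X j)) :=
  dif_neg j.2

lemma aeval_laurentVar_prod_X_eq_zero (hΔ : IsLowerSet Δ) {s : Finset (Fin n)} (hs : s ∉ Δ) :
    aeval (laurentVar n k Δ F) (∏ i ∈ s, X i : MvPolynomial (Fin n) k) = 0 := by
  have hlink : ∏ j ∈ s.subtype (· ∉ F), (X j : MvPolynomial {i // i ∉ F} k) ∈
      linkIdeal n k Δ F := by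
    refine Ideal.subset_span ⟨_, ?_, rfl⟩
    rw [Finset.image_val_subtype, ← Finset.sdiff_eq_filter,
      mem_link_iff_union_mem hΔ Finset.disjoint_sdiff, Finset.union_sdiff_self_eq_union]
    exact fun h => hs (hΔ Finset.subset_union_right h)
  have houtside : ∏ i ∈ s.filter (· ∉ F), laurentVar n k Δ F i = 0 := by
    rw [← Finset.prod_subtype_eq_prod_filter,
      Finset.prod_congr rfl fun j _ => laurentVar_coe_of_notMem n k Δ F j, ← map_prod,
      ← map_prod, Ideal.Quotient.eq_zero_iff_mem.2 hlink, map_zero]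
  rw [map_prod, ← Finset.prod_filter_mul_prod_filter_not s (· ∈ F)]
  simp only [aeval_X, houtside, mul_zero]

lemma srIdeal_le_ker_aeval_laurentVar (hΔ : IsLowerSet Δ) :
    srIdeal n k Δ ≤ RingHom.ker (aeval (laurentVar n k Δ F)) :=
  Ideal.span_le.2 fun _ ⟨_, hs, hp⟩ => hp ▸ aeval_laurentVar_prod_X_eq_zero n k Δ F hΔ hs

noncomputable def srToLinkLaurent (hΔ : IsLowerSet Δ) :
    (MvPolynomial (Fin n) k ⧸ srIdeal n k Δ) →ₐ[k] LinkLaurent n k Δ F :=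
  Ideal.Quotient.liftₐ _ (aeval (laurentVar n k Δ F)) fun _ hp =>
    RingHom.mem_ker.1 (srIdeal_le_ker_aeval_laurentVar n k Δ F hΔ hp)

lemma isUnit_srToLinkLaurent (hΔ : IsLowerSet Δ) (y : faceSubmonoid n k Δ F) :
    IsUnit (srToLinkLaurent n k Δ F hΔ y) := by
  suffices faceSubmonoid n k Δ F ≤ (IsUnit.submonoid _).comap (srToLinkLaurent n k Δ F hΔ) from
    this y.2
  refine Submonoid.closure_le.2 (Set.image_subset_iff.2 fun i (hi : i ∈ F) => ?_)
  change IsUnit (aeval (laurentVar n k Δ F) (X i))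
  rw [aeval_X, show i = (⟨i, hi⟩ : {i // i ∈ F}).1 from rfl, laurentVar_coe_of_mem]
  exact (Group.isUnit _).map (of _ _)

noncomputable def toLinkLaurent (hΔ : IsLowerSet Δ) :
    Localization (faceSubmonoid n k Δ F) →ₐ[k] LinkLaurent n k Δ F :=
  IsLocalization.liftAlgHom (S := Localization (faceSubmonoid n k Δ F))
    (P := LinkLaurent n k Δ F) (isUnit_srToLinkLaurent n k Δ F hΔ)

lemma toLinkLaurent_algebraMap_mk_X (hΔ : IsLowerSet Δ) (i : Fin n) :
    toLinkLaurent n k Δ F hΔ (algebraMap _ _ (Ideal.Quotient.mk (srIdeal n k Δ) (X i))) =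
      laurentVar n k Δ F i :=
  (IsLocalization.lift_eq _ _).trans (aeval_X _ i)

end ToLinkLaurent

section OfLinkLaurent

variable {n k Δ F} in
lemma mk_X_mem_faceSubmonoid {i : Fin n} (hi : i ∈ F) :
    Ideal.Quotient.mk (srIdeal n k Δ) (X i) ∈ faceSubmonoid n k Δ F :=
  Submonoid.subset_closure ⟨i, hi, rfl⟩

lemma algebraMap_mk_prod_X_eq_zero (hΔ : IsLowerSet Δ) {G : Finset (Fin n)}
    (hG : Disjoint F G) (hGF : G ∉ link n Δ F) :
    algebraMap _ (Localization (faceSubmonoid n k Δ F))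
      (Ideal.Quotient.mk (srIdeal n k Δ) (∏ i ∈ G, X i : MvPolynomial (Fin n) k)) = 0 := by
  rw [mem_link_iff_union_mem hΔ hG] at hGF
  have hF : Ideal.Quotient.mk (srIdeal n k Δ) (∏ i ∈ F, X i) ∈ faceSubmonoid n k Δ F := by
    rw [map_prod]
    exact Submonoid.prod_mem _ fun i hi => mk_X_mem_faceSubmonoid hi
  refine (IsLocalization.map_eq_zero_iff (faceSubmonoid n k Δ F)
    (Localization (faceSubmonoid n k Δ F)) _).2 ⟨⟨_, hF⟩, ?_⟩
  rw [← map_mul, ← Finset.prod_union hG, Ideal.Quotient.eq_zero_iff_mem]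
  exact Ideal.subset_span ⟨_, hGF, rfl⟩

noncomputable def polyToLocalization :
    MvPolynomial {i : Fin n // i ∉ F} k →ₐ[k] Localization (faceSubmonoid n k Δ F) :=
  (IsScalarTower.toAlgHom k _ _).comp
    ((Ideal.Quotient.mkₐ k (srIdeal n k Δ)).comp (rename Subtype.val))

lemma linkIdeal_le_ker_polyToLocalization (hΔ : IsLowerSet Δ) :
    linkIdeal n k Δ F ≤ RingHom.ker (polyToLocalization n k Δ F) := by
  refine Ideal.span_le.2 ?_
  rintro _ ⟨t, ht, rfl⟩
  have hdisj : Disjoint F (t.image Subtype.val) := Finset.disjoint_right.2 fun i hi => by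
    obtain ⟨j, -, rfl⟩ := Finset.mem_image.1 hi
    exact j.2
  rw [SetLike.mem_coe, RingHom.mem_ker, ← algebraMap_mk_prod_X_eq_zero n k Δ F hΔ hdisj ht,
    Finset.prod_image Subtype.val_injective.injOn]
  simp [polyToLocalization]

noncomputable def linkRingToLocalization (hΔ : IsLowerSet Δ) :
    linkRing n k Δ F →ₐ[k] Localization (faceSubmonoid n k Δ F) :=
  Ideal.Quotient.liftₐ _ (polyToLocalization n k Δ F) fun _ hp =>
    RingHom.mem_ker.1 (linkIdeal_le_ker_polyToLocalization n k Δ F hΔ hp)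

lemma linkRingToLocalization_mk_X (hΔ : IsLowerSet Δ) (j : {i : Fin n // i ∉ F}) :
    linkRingToLocalization n k Δ F hΔ (Ideal.Quotient.mk (linkIdeal n k Δ F) (X j)) =
      algebraMap _ _ (Ideal.Quotient.mk (srIdeal n k Δ) (X j.1)) := by
  change polyToLocalization n k Δ F (X j) = _
  simp [polyToLocalization]

noncomputable def faceUnit (i : {i : Fin n // i ∈ F}) :
    (Localization (faceSubmonoid n k Δ F))ˣ :=
  (IsLocalization.map_units (Localization (faceSubmonoid n k Δ F))
    ⟨_, mk_X_mem_faceSubmonoid (k := k) (Δ := Δ) i.2⟩).unit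

noncomputable def faceMonomial :
    Multiplicative ({i : Fin n // i ∈ F} →₀ ℤ) →* Localization (faceSubmonoid n k Δ F) :=
  (Units.coeHom _).comp (Finsupp.zpowHom (faceUnit n k Δ F))

lemma faceMonomial_single_one (i : {i : Fin n // i ∈ F}) :
    faceMonomial n k Δ F (Multiplicative.ofAdd (Finsupp.single i 1)) =
      algebraMap _ _ (Ideal.Quotient.mk (srIdeal n k Δ) (X i.1)) := by
  rw [faceMonomial, MonoidHom.comp_apply, Finsupp.zpowHom_single_one, Units.coeHom_apply,
    faceUnit, IsUnit.unit_spec]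

noncomputable def ofLinkLaurent (hΔ : IsLowerSet Δ) :
    LinkLaurent n k Δ F →ₐ[k] Localization (faceSubmonoid n k Δ F) :=
  liftNCAlgHom (linkRingToLocalization n k Δ F hΔ) (faceMonomial n k Δ F)
    fun _ _ => Commute.all _ _

lemma ofLinkLaurent_single (hΔ : IsLowerSet Δ) (a : {i : Fin n // i ∈ F} →₀ ℤ)
    (b : linkRing n k Δ F) :
    ofLinkLaurent n k Δ F hΔ (single a b) =
      linkRingToLocalization n k Δ F hΔ b * faceMonomial n k Δ F (Multiplicative.ofAdd a) :=
  liftNC_single _ _ _ _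

lemma ofLinkLaurent_laurentVar (hΔ : IsLowerSet Δ) (i : Fin n) :
    ofLinkLaurent n k Δ F hΔ (laurentVar n k Δ F i) =
      algebraMap _ _ (Ideal.Quotient.mk (srIdeal n k Δ) (X i)) := by
  by_cases hi : i ∈ F
  · rw [show i = (⟨i, hi⟩ : {i // i ∈ F}).1 from rfl, laurentVar_coe_of_mem,
      ofLinkLaurent_single, map_one, one_mul, faceMonomial_single_one]
  · rw [show i = (⟨i, hi⟩ : {i // i ∉ F}).1 from rfl, laurentVar_coe_of_notMem,
      AddMonoidAlgebra.coe_algebraMap, Function.comp_apply, ofLinkLaurent_single, ofAdd_zero,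
      map_one, mul_one, Algebra.algebraMap_self, RingHom.id_apply, linkRingToLocalization_mk_X]

end OfLinkLaurent

lemma ofLinkLaurent_comp_toLinkLaurent (hΔ : IsLowerSet Δ) :
    (ofLinkLaurent n k Δ F hΔ).comp (toLinkLaurent n k Δ F hΔ) = AlgHom.id k _ := by
  refine Localization.algHom_ext _
    (Ideal.Quotient.algHom_ext k (MvPolynomial.algHom_ext fun i => ?_))
  calc ofLinkLaurent n k Δ F hΔ (toLinkLaurent n k Δ F hΔ
        (algebraMap _ _ (Ideal.Quotient.mk (srIdeal n k Δ) (X i))))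
      _ = ofLinkLaurent n k Δ F hΔ (laurentVar n k Δ F i) := by
        rw [toLinkLaurent_algebraMap_mk_X]
      _ = algebraMap _ _ (Ideal.Quotient.mk (srIdeal n k Δ) (X i)) :=
        ofLinkLaurent_laurentVar n k Δ F hΔ i

lemma toLinkLaurent_comp_ofLinkLaurent (hΔ : IsLowerSet Δ) :
    (toLinkLaurent n k Δ F hΔ).comp (ofLinkLaurent n k Δ F hΔ) = AlgHom.id k _ := by
  have hvar (i : Fin n) :
      toLinkLaurent n k Δ F hΔ (ofLinkLaurent n k Δ F hΔ (laurentVar n k Δ F i)) =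
        laurentVar n k Δ F i := by
    rw [ofLinkLaurent_laurentVar, toLinkLaurent_algebraMap_mk_X]
  refine AddMonoidAlgebra.algHom_ext' (Finsupp.mulHom_ext' fun i => MonoidHom.ext_mint ?_)
    (Ideal.Quotient.algHom_ext k (MvPolynomial.algHom_ext fun j => ?_))
  · simpa [laurentVar_coe_of_mem] using hvar i
  · simpa [laurentVar_coe_of_notMem] using hvar j

noncomputable def localizationAlgEquiv (hΔ : IsLowerSet Δ) :
    Localization (faceSubmonoid n k Δ F) ≃ₐ[k] LinkLaurent n k Δ F :=
  AlgEquiv.ofAlgHom (toLinkLaurent n k Δ F hΔ) (ofLinkLaurent n k Δ F hΔ)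
    (toLinkLaurent_comp_ofLinkLaurent n k Δ F hΔ) (ofLinkLaurent_comp_toLinkLaurent n k Δ F hΔ)

end StanleyReisner

theorem stmt5 (Δ : Set (Finset (Fin n))) (hΔ : ∀ s ∈ Δ, ∀ t ⊆ s, t ∈ Δ)
    (F : Finset (Fin n)) :
    ∃ e : Localization (Submonoid.closure
        ((fun i : Fin n => Ideal.Quotient.mk (srIdeal n k Δ) (X i)) '' ↑F)) ≃+*
      AddMonoidAlgebra (linkRing n k Δ F) ({i : Fin n // i ∈ F} →₀ ℤ),
      ∀ c : k, e (algebraMap _ _ (algebraMap k (MvPolynomial (Fin n) k ⧸ srIdeal n k Δ) c))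
        = algebraMap k _ c := by
  let e := StanleyReisner.localizationAlgEquiv n k Δ F fun _ _ hts hs => hΔ _ hs _ hts
  refine ⟨e.toRingEquiv, fun c => ?_⟩
  rw [← IsScalarTower.algebraMap_apply]
  exact e.commutes c
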